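/- In the m×n rectangle R = [0,m]×[0,n] of the square lattice, it is impossible for both an open left-right crossing of R (in the lattice ℤ² + (1/2,1/2)) and a closed dual top-bottom crossing of R (in the dual lattice ℤ²) to exist simultaneously, where each dual edge is open iff the unique lattice edge it crosses perpendicularly is open. -/

import Mathlib

/-- The unit-square grid graph on `ℤ²` (used both for the lattice
`G_d = ℤ² + (1/2,1/2)`, whose vertex `(i,j)` sits at the physical point
`(i+1/2, j+1/2) - (1/2,1/2) = (i,j)`, and for its dual lattice, whose vertex
`(i,j)` sits at the physical point `(i-1/2, j-1/2)`). -/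
def gridGraph : SimpleGraph (ℤ × ℤ) where
  Adj u v := (u.1 - v.1).natAbs + (u.2 - v.2).natAbs = 1
  symm := ⟨by intro u v h; omega⟩
  loopless := ⟨by intro u h; simp at h⟩

/-- The dual edge `f` (in the dual lattice, whose vertex `(i,j)` sits at
`(i-1/2, j-1/2)`) crosses the lattice edge `e` (whose vertex `(i,j)` sits at
`(i,j)`) perpendicularly. -/
def dualCross (e f : Sym2 (ℤ × ℤ)) : Prop :=
  ∃ i j : ℤ,
    (e = s(((i, j) : ℤ × ℤ), (i + 1, j)) ∧ f = s(((i + 1, j) : ℤ × ℤ), (i + 1, j + 1))) ∨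
    (e = s(((i, j) : ℤ × ℤ), (i, j + 1)) ∧ f = s(((i, j + 1) : ℤ × ℤ), (i + 1, j + 1)))

/-- A dual edge is closed iff the unique lattice edge it crosses perpendicularly
is closed. -/
def dualClosed (ω : Sym2 (ℤ × ℤ) → Prop) (f : Sym2 (ℤ × ℤ)) : Prop :=
  ∃ e, dualCross e f ∧ ¬ ω e

/-- A left-right crossing of the rectangle `R = [0,m] × [0,n]`: a self-avoiding
path in the lattice from the left side to the right side, all of whose vertices
lie in `R`, meeting the left side only at its first vertex and the right side
only at its last vertex. -/
def isLRCrossing (m n : ℤ) {u v : ℤ × ℤ} (w : gridGraph.Walk u v) : Prop :=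
  w.IsPath ∧ u.1 = 0 ∧ 0 ≤ u.2 ∧ u.2 ≤ n ∧ v.1 = m ∧ 0 ≤ v.2 ∧ v.2 ≤ n ∧
  (∀ x ∈ w.support, 0 ≤ x.1 ∧ x.1 ≤ m ∧ 0 ≤ x.2 ∧ x.2 ≤ n) ∧
  (∀ x ∈ w.support, x.1 = 0 → x = u) ∧ (∀ x ∈ w.support, x.1 = m → x = v)

/-- A dual top-bottom crossing of `R = [0,m] × [0,n]`: a self-avoiding path in the
dual lattice (vertex `(i,j)` at physical point `(i-1/2, j-1/2)`) whose first edge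
crosses the top side of `R`, whose last edge crosses the bottom side, and all of
whose intermediate vertices lie in the interior of `R`. -/
def isTBDualCrossing (m n : ℤ) {a b : ℤ × ℤ} (w : gridGraph.Walk a b) : Prop :=
  w.IsPath ∧ a.2 = n + 1 ∧ 1 ≤ a.1 ∧ a.1 ≤ m ∧ b.2 = 0 ∧ 1 ≤ b.1 ∧ b.1 ≤ m ∧
  ∀ x ∈ w.support, x ≠ a → x ≠ b → (1 ≤ x.1 ∧ x.1 ≤ m ∧ 1 ≤ x.2 ∧ x.2 ≤ n)

/-! Let `γ` be the open crossing, from `u` on the left side to `v` on the right side. For a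
dual vertex `z`, count with signs the crossings of `γ` with the vertical ray going down from `z`.
Above the rectangle this number is `1` (the ray separates `u` from `v`), below it is `0`. It does
not change along a closed dual edge: such an edge crosses no edge of `γ`, and the strip between
the rays of its two endpoints contains neither `u` nor `v` as long as the dual edge lies strictly
between the left and right sides. -/

theorem SimpleGraph.Walk.sum_darts_sub {V G : Type*} [AddCommGroup G] {Γ : SimpleGraph V}
    (f : V → G) {u v : V} (w : Γ.Walk u v) :
    (w.darts.map fun d => f d.snd - f d.fst).sum = f v - f u := by
  induction w with
  | nil => simp
  | cons _ w ih => simp only [SimpleGraph.Walk.darts_cons, List.map_cons, List.sum_cons, ih]; abel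

theorem dualCross_vertical {e : Sym2 (ℤ × ℤ)} {z : ℤ × ℤ} (h : dualCross e s(z, (z.1, z.2 + 1))) :
    e = s((z.1 - 1, z.2), z) := by
  obtain ⟨i, j, ⟨he, hf⟩ | ⟨-, hf⟩⟩ := h <;>
    simp only [Sym2.eq_iff, Prod.ext_iff] at hf
  · obtain ⟨rfl, rfl⟩ : i = z.1 - 1 ∧ j = z.2 := by omega
    rw [he]; norm_num
  · omega

theorem dualCross_horizontal {e : Sym2 (ℤ × ℤ)} {z : ℤ × ℤ} (h : dualCross e s(z, (z.1 + 1, z.2))) :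
    e = s((z.1, z.2 - 1), z) := by
  obtain ⟨i, j, ⟨-, hf⟩ | ⟨he, hf⟩⟩ := h <;>
    simp only [Sym2.eq_iff, Prod.ext_iff] at hf
  · omega
  · obtain ⟨rfl, rfl⟩ : i = z.1 ∧ j = z.2 - 1 := by omega
    rw [he]; norm_num

/-- Signed crossing of the step `x → y` with the vertical ray going down from the dual
vertex `z`, i.e. with the horizontal edges `{(z.1 - 1, j), (z.1, j)}`, `j < z.2`. -/
def rayCrossing (z x y : ℤ × ℤ) : ℤ :=
  if x.2 = y.2 ∧ x.2 < z.2 then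
    if x.1 = z.1 - 1 ∧ y.1 = z.1 then 1 else if x.1 = z.1 ∧ y.1 = z.1 - 1 then -1 else 0
  else 0

def rayCrossings {u v : ℤ × ℤ} (γ : gridGraph.Walk u v) (z : ℤ × ℤ) : ℤ :=
  (γ.darts.map fun d => rayCrossing z d.fst d.snd).sum

section rayCrossings

variable {u v : ℤ × ℤ} (γ : gridGraph.Walk u v) {ω : Sym2 (ℤ × ℤ) → Prop}

theorem rayCrossings_eq_of_below {z : ℤ × ℤ} (hγ : ∀ x ∈ γ.support, x.2 < z.2) :
    rayCrossings γ z = (if z.1 ≤ v.1 then 1 else 0) - (if z.1 ≤ u.1 then 1 else 0) := by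
  refine (congrArg List.sum (List.map_congr_left fun d hd => ?_)).trans
    (γ.sum_darts_sub fun x => if z.1 ≤ x.1 then 1 else 0)
  have hadj : (d.fst.1 - d.snd.1).natAbs + (d.fst.2 - d.snd.2).natAbs = 1 := d.adj
  have := hγ _ (γ.dart_fst_mem_support_of_mem_darts hd)
  unfold rayCrossing
  split_ifs <;> omega

theorem rayCrossings_eq_zero_of_above {z : ℤ × ℤ} (hγ : ∀ x ∈ γ.support, z.2 ≤ x.2) :
    rayCrossings γ z = 0 := by
  refine List.sum_eq_zero fun c hc => ?_
  obtain ⟨d, hd, rfl⟩ := List.mem_map.mp hc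
  have := hγ _ (γ.dart_fst_mem_support_of_mem_darts hd)
  unfold rayCrossing
  split_ifs <;> omega

theorem rayCrossings_up {z : ℤ × ℤ} (hz : s((z.1 - 1, z.2), z) ∉ γ.edges) :
    rayCrossings γ (z.1, z.2 + 1) = rayCrossings γ z := by
  refine congrArg List.sum (List.map_congr_left fun d hd => ?_)
  have hne : d.edge ≠ s((z.1 - 1, z.2), z) := fun h => hz (h ▸ List.mem_map_of_mem hd)
  simp only [SimpleGraph.Dart.edge, ne_eq, Sym2.eq_iff, Prod.ext_iff] at hne
  unfold rayCrossing
  split_ifs <;> omega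

/-- The rays from `z` and `(z.1 + 1, z.2)` bound the column `{(z.1, j) : j < z.2}`, which a walk
enters or leaves only through the edge `{(z.1, z.2 - 1), z}` on top of it or at its endpoints. -/
theorem rayCrossings_right {z : ℤ × ℤ} (hz : s((z.1, z.2 - 1), z) ∉ γ.edges)
    (hu : u.1 ≠ z.1) (hv : v.1 ≠ z.1) :
    rayCrossings γ (z.1 + 1, z.2) = rayCrossings γ z := by
  let inColumn : ℤ × ℤ → ℤ := fun x => if x.1 = z.1 ∧ x.2 < z.2 then 1 else 0
  have key : rayCrossings γ z = rayCrossings γ (z.1 + 1, z.2) + (inColumn v - inColumn u) := by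
    rw [rayCrossings, rayCrossings, ← γ.sum_darts_sub, ← List.sum_map_add]
    refine congrArg List.sum (List.map_congr_left fun d hd => ?_)
    have hadj : (d.fst.1 - d.snd.1).natAbs + (d.fst.2 - d.snd.2).natAbs = 1 := d.adj
    have hne : d.edge ≠ s((z.1, z.2 - 1), z) := fun h => hz (h ▸ List.mem_map_of_mem hd)
    simp only [SimpleGraph.Dart.edge, ne_eq, Sym2.eq_iff, Prod.ext_iff] at hne
    unfold rayCrossing inColumn
    split_ifs <;> omega
  simpa [inColumn, hu, hv] using key.symm

theorem rayCrossings_eq_of_closed_step (hopen : ∀ e ∈ γ.edges, ω e) {z z' : ℤ × ℤ}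
    (hstep : z' = (z.1, z.2 + 1) ∨ (z' = (z.1 + 1, z.2) ∧ u.1 < z.1 ∧ z.1 < v.1))
    (hf : dualClosed ω s(z, z')) : rayCrossings γ z' = rayCrossings γ z := by
  obtain ⟨e, he, hωe⟩ := hf
  have he_not : e ∉ γ.edges := fun h => hωe (hopen e h)
  rcases hstep with rfl | ⟨rfl, hu, hv⟩
  · exact rayCrossings_up γ (dualCross_vertical he ▸ he_not)
  · exact rayCrossings_right γ (dualCross_horizontal he ▸ he_not) hu.ne hv.ne'

theorem rayCrossings_eq_of_adj (hopen : ∀ e ∈ γ.edges, ω e) {c c' : ℤ × ℤ}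
    (hadj : gridGraph.Adj c c') (hc : u.1 < c.1 ∧ c.1 ≤ v.1) (hc' : u.1 < c'.1 ∧ c'.1 ≤ v.1)
    (hf : dualClosed ω s(c, c')) : rayCrossings γ c = rayCrossings γ c' := by
  have hnat : (c.1 - c'.1).natAbs + (c.2 - c'.2).natAbs = 1 := hadj
  obtain h | h | h | h : (c'.1 = c.1 ∧ c'.2 = c.2 + 1) ∨ (c.1 = c'.1 ∧ c.2 = c'.2 + 1) ∨
      (c'.1 = c.1 + 1 ∧ c'.2 = c.2) ∨ (c.1 = c'.1 + 1 ∧ c.2 = c'.2) := by omega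
  · exact (rayCrossings_eq_of_closed_step γ hopen (.inl (Prod.ext h.1 h.2)) hf).symm
  · exact rayCrossings_eq_of_closed_step γ hopen (.inl (Prod.ext h.1 h.2)) (Sym2.eq_swap ▸ hf)
  · exact (rayCrossings_eq_of_closed_step γ hopen
      (.inr ⟨Prod.ext h.1 h.2, by omega, by omega⟩) hf).symm
  · exact rayCrossings_eq_of_closed_step γ hopen
      (.inr ⟨Prod.ext h.1 h.2, by omega, by omega⟩) (Sym2.eq_swap ▸ hf)

theorem rayCrossings_eq_of_closed_dual_walk (hopen : ∀ e ∈ γ.edges, ω e) {a b : ℤ × ℤ}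
    (δ : gridGraph.Walk a b) (hδ : ∀ x ∈ δ.support, u.1 < x.1 ∧ x.1 ≤ v.1)
    (hclosed : ∀ f ∈ δ.edges, dualClosed ω f) : rayCrossings γ a = rayCrossings γ b := by
  induction δ with
  | nil => rfl
  | cons hadj δ ih =>
    simp only [SimpleGraph.Walk.support_cons, SimpleGraph.Walk.edges_cons, List.mem_cons,
      forall_eq_or_imp] at hδ hclosed
    exact (rayCrossings_eq_of_adj γ hopen hadj hδ.1 (hδ.2 _ δ.start_mem_support)
      hclosed.1).trans (ih hδ.2 hclosed.2)

end rayCrossings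

theorem no_open_LR_and_closed_dual_TB_general (m n : ℤ)
    (ω : Sym2 (ℤ × ℤ) → Prop) :
    ¬ ((∃ (u v : ℤ × ℤ) (w : gridGraph.Walk u v), isLRCrossing m n w ∧
          ∀ e ∈ w.edges, ω e) ∧
       (∃ (a b : ℤ × ℤ) (w : gridGraph.Walk a b), isTBDualCrossing m n w ∧
          ∀ f ∈ w.edges, dualClosed ω f)) := by
  rintro ⟨⟨u, v, γ, ⟨-, hu, -, -, hv, -, -, hγ, -, -⟩, hopen⟩,
    a, b, δ, ⟨-, ha, ha₁, ha₂, hb, hb₁, hb₂, hδ⟩, hclosed⟩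
  have hstrip : ∀ x ∈ δ.support, u.1 < x.1 ∧ x.1 ≤ v.1 := by
    intro x hx
    by_cases hxa : x = a
    · subst hxa; omega
    by_cases hxb : x = b
    · subst hxb; omega
    have := hδ x hx hxa hxb
    omega
  have htop : rayCrossings γ a = 1 := by
    rw [rayCrossings_eq_of_below γ fun x hx => by have := hγ x hx; omega]
    simp only [hu, hv, ha₂, if_true]
    rw [if_neg (by omega), sub_zero]
  have hbot : rayCrossings γ b = 0 :=
    rayCrossings_eq_zero_of_above γ fun x hx => by have := hγ x hx; omega
  have := rayCrossings_eq_of_closed_dual_walk γ hopen δ hstrip hclosed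
  omega

/-- It is impossible for an open left-right crossing of the rectangle `R` and a
closed dual top-bottom crossing of `R` to exist simultaneously. -/
theorem no_open_LR_and_closed_dual_TB (m n : ℤ) (hm : 0 < m) (hn : 0 < n)
    (ω : Sym2 (ℤ × ℤ) → Prop) :
    ¬ ((∃ (u v : ℤ × ℤ) (w : gridGraph.Walk u v), isLRCrossing m n w ∧
          ∀ e ∈ w.edges, ω e) ∧
       (∃ (a b : ℤ × ℤ) (w : gridGraph.Walk a b), isTBDualCrossing m n w ∧
          ∀ f ∈ w.edges, dualClosed ω f)) :=
  no_open_LR_and_closed_dual_TB_general m n ω
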